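/- Let (X, ‖·‖) be a complex normed space and let x, y ∈ X be linearly independent over ℝ. Then the map Θ: ℝ → ℂ, Θ(t) := ∠(x, y + t·x), is continuous and injective, and lim_{t→−∞} Θ(t) = π and lim_{t→+∞} Θ(t) = 0. -/

import Mathlib

/-!
Write `u = x / ‖x‖` and `v t = (y + t x) / ‖y + t x‖`. The product `⟨x|y + t x⟩` is
`‖x‖ ‖y + t x‖` times the polarization expression `P(u, v t)`, so `Θ t = arccos P(u, v t)`.

On `B` the given formula for `arccos` is a right inverse of `cos` (the half-angle formulas give
`sin (arcsin z) = z`), and it is continuous there; for unit vectors `|Re P| ≤ 1`, so `P(u, v t)`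
stays in `B`. Hence `Θ` is continuous, and it is injective as soon as
`Re P(u, v t) = (‖u + v t‖² - ‖u - v t‖²) / 4` is. Convexity of `s ↦ ‖y + s x‖` makes `‖u + v t‖`
nondecreasing and `‖u - v t‖` nonincreasing; if both were constant on `[t₁, t₂]`, the convexity
estimates would be equalities, and the triangle inequality would then force `u + v t₂ = 0` or
`u = v t₁`, which linear independence excludes. Finally `v t → ±u` as `t → ±∞`, `P(u, ±u) = ±1`,
`arccos 1 = 0` and `arccos (-1) = π`.
-/

/-- The real area hyperbolic cosine, `arcosh x = log (x + √(x² − 1))`. -/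
noncomputable def arcosh (x : ℝ) : ℝ := Real.log (x + Real.sqrt (x ^ 2 - 1))

/-- `G₋ = √((r²+s²−1)² + 4s²) − (r²+s²)` for `z = r + i·s`. -/
noncomputable def Gminus (z : ℂ) : ℝ :=
  Real.sqrt ((z.re ^ 2 + z.im ^ 2 - 1) ^ 2 + 4 * z.im ^ 2) - (z.re ^ 2 + z.im ^ 2)

/-- `G₊ = √((r²+s²−1)² + 4s²) + (r²+s²)` for `z = r + i·s`. -/
noncomputable def Gplus (z : ℂ) : ℝ :=
  Real.sqrt ((z.re ^ 2 + z.im ^ 2 - 1) ^ 2 + 4 * z.im ^ 2) + (z.re ^ 2 + z.im ^ 2)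

/-- The complex arcsine: `arcsin(r+is) = ½·(sgn r · arccos G₋ + i · sgn s · arcosh G₊)`. -/
noncomputable def carcsin (z : ℂ) : ℂ :=
  (1 / 2 : ℂ) *
    (((Real.sign z.re * Real.arccos (Gminus z) : ℝ) : ℂ) +
      Complex.I * ((Real.sign z.im * arcosh (Gplus z) : ℝ) : ℂ))

/-- The complex arccosine: `arccos z = π/2 − arcsin z`. -/
noncomputable def carccos (z : ℂ) : ℂ := ((Real.pi / 2 : ℝ) : ℂ) - carcsin z
/-- The continuous product `⟨x|y⟩` in a complex normed space. -/
noncomputable def cprod {X : Type*} [NormedAddCommGroup X] [NormedSpace ℂ X] (x y : X) : ℂ :=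
  open scoped Classical in
  if x = 0 ∨ y = 0 then 0
  else
    ((‖x‖ * ‖y‖ : ℝ) : ℂ) * (1 / 4 : ℂ) *
      (((‖((‖x‖⁻¹ : ℝ) : ℂ) • x + ((‖y‖⁻¹ : ℝ) : ℂ) • y‖ ^ 2
          - ‖((‖x‖⁻¹ : ℝ) : ℂ) • x - ((‖y‖⁻¹ : ℝ) : ℂ) • y‖ ^ 2 : ℝ) : ℂ)
        + Complex.I *
          ((‖((‖x‖⁻¹ : ℝ) : ℂ) • x + Complex.I • (((‖y‖⁻¹ : ℝ) : ℂ) • y)‖ ^ 2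
            - ‖((‖x‖⁻¹ : ℝ) : ℂ) • x - Complex.I • (((‖y‖⁻¹ : ℝ) : ℂ) • y)‖ ^ 2 : ℝ) : ℂ))
/-- The complex angle `∠(x,y) = arccos(⟨x|y⟩ / (‖x‖·‖y‖))`. -/
noncomputable def cangle {X : Type*} [NormedAddCommGroup X] [NormedSpace ℂ X] (x y : X) : ℂ :=
  carccos (cprod x y / ((‖x‖ * ‖y‖ : ℝ) : ℂ))

open Filter Topology

lemma arcosh_eq_real_arcosh : arcosh = Real.arcosh := rfl

lemma Real.cosh_half (x : ℝ) : Real.cosh (x / 2) = √((1 + Real.cosh x) / 2) := by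
  have h : Real.cosh x = Real.cosh (2 * (x / 2)) := by ring_nf
  rw [← Real.sqrt_sq (Real.cosh_pos (x / 2)).le, h, Real.cosh_two_mul, Real.sinh_sq]
  ring_nf

lemma Real.sinh_half_of_nonneg {x : ℝ} (hx : 0 ≤ x) :
    Real.sinh (x / 2) = √((Real.cosh x - 1) / 2) := by
  have h : Real.cosh x = Real.cosh (2 * (x / 2)) := by ring_nf
  rw [← Real.sqrt_sq (Real.sinh_nonneg_iff.mpr (by linarith)), h, Real.cosh_two_mul, Real.cosh_sq]
  ring_nf

lemma Real.sign_mul_abs (r : ℝ) : Real.sign r * |r| = r := by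
  rcases lt_trichotomy r 0 with h | rfl | h
  · rw [Real.sign_of_neg h, abs_of_neg h]; ring
  · simp
  · rw [Real.sign_of_pos h, abs_of_pos h]; ring

lemma Real.abs_sign_le_one (r : ℝ) : |Real.sign r| ≤ 1 := by
  rcases Real.sign_apply_eq r with h | h | h <;> simp [h]

lemma Real.sin_sign_mul (r x : ℝ) : Real.sin (Real.sign r * x) = Real.sign r * Real.sin x := by
  rcases Real.sign_apply_eq r with h | h | h <;> simp [h]

lemma Real.sinh_sign_mul (r x : ℝ) : Real.sinh (Real.sign r * x) = Real.sign r * Real.sinh x := by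
  rcases Real.sign_apply_eq r with h | h | h <;> simp [h]

/-- The domain `B = ℂ \ {t ∈ ℝ : t < -1 ∨ t > 1}` of the complex arccosine. -/
def arccosDomain : Set ℂ := {z | z.im = 0 → |z.re| ≤ 1}

section ComplexArcsin

variable (z : ℂ)

lemma abs_normSq_sub_one_le_sqrt_discr :
    |z.re ^ 2 + z.im ^ 2 - 1| ≤ √((z.re ^ 2 + z.im ^ 2 - 1) ^ 2 + 4 * z.im ^ 2) := by
  rw [← Real.sqrt_sq_eq_abs]
  exact Real.sqrt_le_sqrt (by nlinarith [sq_nonneg z.im])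

lemma sqrt_discr_le_one_add_normSq :
    √((z.re ^ 2 + z.im ^ 2 - 1) ^ 2 + 4 * z.im ^ 2) ≤ 1 + (z.re ^ 2 + z.im ^ 2) :=
  Real.sqrt_le_iff.mpr ⟨by positivity, by nlinarith [sq_nonneg z.re]⟩

lemma Gminus_mem_Icc : Gminus z ∈ Set.Icc (-1) 1 := by
  have := abs_normSq_sub_one_le_sqrt_discr z
  have := le_abs_self (z.re ^ 2 + z.im ^ 2 - 1)
  have := sqrt_discr_le_one_add_normSq z
  constructor <;> unfold Gminus <;> linarith

lemma one_le_Gplus : 1 ≤ Gplus z := by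
  have := abs_normSq_sub_one_le_sqrt_discr z
  have := neg_abs_le (z.re ^ 2 + z.im ^ 2 - 1)
  unfold Gplus; linarith

lemma sq_sqrt_discr :
    √((z.re ^ 2 + z.im ^ 2 - 1) ^ 2 + 4 * z.im ^ 2) ^ 2
      = (z.re ^ 2 + z.im ^ 2 - 1) ^ 2 + 4 * z.im ^ 2 :=
  Real.sq_sqrt (by positivity)

lemma one_sub_Gminus_mul_one_add_Gplus : (1 - Gminus z) * (1 + Gplus z) = 4 * z.re ^ 2 := by
  unfold Gminus Gplus
  linear_combination -sq_sqrt_discr z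

lemma one_add_Gminus_mul_Gplus_sub_one : (1 + Gminus z) * (Gplus z - 1) = 4 * z.im ^ 2 := by
  unfold Gminus Gplus
  linear_combination sq_sqrt_discr z

variable {z}

lemma Gminus_eq_one_of_re_eq_zero (h : z.re = 0) : Gminus z = 1 := by
  have h0 : (1 - Gminus z) * (1 + Gplus z) = 0 := by
    rw [one_sub_Gminus_mul_one_add_Gplus, h]; ring
  have := one_le_Gplus z
  linarith [(mul_eq_zero.mp h0).resolve_right (by linarith)]

lemma Gplus_eq_one_of_im_eq_zero (h : z.im = 0) (hre : |z.re| ≤ 1) : Gplus z = 1 := by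
  have hsq : z.re ^ 2 ≤ 1 := by nlinarith [sq_abs z.re, abs_nonneg z.re]
  unfold Gplus
  rw [h, show (z.re ^ 2 + 0 ^ 2 - 1) ^ 2 + 4 * 0 ^ 2 = (1 - z.re ^ 2) ^ 2 by ring,
    Real.sqrt_sq (by linarith)]
  ring

theorem sin_carcsin (hz : z ∈ arccosDomain) : Complex.sin (carcsin z) = z := by
  obtain ⟨hGm₁, hGm₂⟩ := Gminus_mem_Icc z
  have hGp := one_le_Gplus z
  set α := Real.arccos (Gminus z) with hα
  set β := arcosh (Gplus z) with hβ
  have hα₀ : 0 ≤ α := Real.arccos_nonneg _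
  have hαπ : α ≤ Real.pi := Real.arccos_le_pi _
  have hβ₀ : 0 ≤ β := Real.arcosh_nonneg hGp
  have hcosα : Real.cos α = Gminus z := Real.cos_arccos hGm₁ hGm₂
  have hcoshβ : Real.cosh β = Gplus z := Real.cosh_arcosh hGp
  have hre : Real.sin (α / 2) * Real.cosh (β / 2) = |z.re| := by
    rw [Real.sin_half_eq_sqrt hα₀ (by linarith), Real.cosh_half, hcosα, hcoshβ,
      ← Real.sqrt_mul (by linarith), ← Real.sqrt_sq_eq_abs]
    congr 1
    linear_combination one_sub_Gminus_mul_one_add_Gplus z / 4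
  have him : Real.cos (α / 2) * Real.sinh (β / 2) = |z.im| := by
    rw [Real.cos_half (by linarith) hαπ, Real.sinh_half_of_nonneg hβ₀, hcosα, hcoshβ,
      ← Real.sqrt_mul (by linarith), ← Real.sqrt_sq_eq_abs]
    congr 1
    linear_combination one_add_Gminus_mul_Gplus_sub_one z / 4
  have hcos : Real.cos (Real.sign z.re * (α / 2)) = Real.cos (α / 2) := by
    rcases lt_trichotomy z.re 0 with h | h | h
    · simp [Real.sign_of_neg h]
    · simp [h, hα, Gminus_eq_one_of_re_eq_zero h]
    · simp [Real.sign_of_pos h]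
  have hcosh : Real.cosh (Real.sign z.im * (β / 2)) = Real.cosh (β / 2) := by
    rcases lt_trichotomy z.im 0 with h | h | h
    · simp [Real.sign_of_neg h]
    · simp [h, hβ, Gplus_eq_one_of_im_eq_zero h (hz h), arcosh_eq_real_arcosh]
    · simp [Real.sign_of_pos h]
  have hcarcsin :
      carcsin z = ↑(Real.sign z.re * (α / 2)) + ↑(Real.sign z.im * (β / 2)) * Complex.I := by
    unfold carcsin; push_cast; ring
  rw [hcarcsin, Complex.sin_add_mul_I, ← Complex.ofReal_sin, ← Complex.ofReal_cosh,
    ← Complex.ofReal_cos, ← Complex.ofReal_sinh, Real.sin_sign_mul, Real.sinh_sign_mul, hcos, hcosh]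
  conv_rhs => rw [← Complex.re_add_im z, ← Real.sign_mul_abs z.re, ← Real.sign_mul_abs z.im,
    ← hre, ← him]
  push_cast; ring

end ComplexArcsin

section ComplexArccos

theorem cos_carccos {z : ℂ} (hz : z ∈ arccosDomain) : Complex.cos (carccos z) = z := by
  rw [carccos, Complex.ofReal_div, Complex.ofReal_ofNat, Complex.cos_pi_div_two_sub, sin_carcsin hz]

theorem carccos_injOn : Set.InjOn carccos arccosDomain :=
  Set.LeftInvOn.injOn (f₁' := Complex.cos) fun _ hz => cos_carccos hz

lemma carccos_one : carccos 1 = 0 := by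
  have hm : Gminus 1 = -1 := by norm_num [Gminus]
  have hp : Gplus 1 = 1 := by norm_num [Gplus]
  simp [carccos, carcsin, hm, hp, arcosh_eq_real_arcosh]
  ring

lemma carccos_neg_one : carccos (-1) = Real.pi := by
  have hm : Gminus (-1) = -1 := by norm_num [Gminus]
  have hp : Gplus (-1) = 1 := by norm_num [Gplus]
  simp [carccos, carcsin, hm, hp, arcosh_eq_real_arcosh, Real.sign_of_neg]
  ring

lemma ContinuousAt.sign_mul {α : Type*} [TopologicalSpace α] {f g : α → ℝ} {a : α}
    (hg : ContinuousAt g a) (hf : ContinuousAt f a) (h : g a = 0 → f a = 0) :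
    ContinuousAt (fun z => Real.sign (g z) * f z) a := by
  rcases lt_trichotomy (g a) 0 with hneg | hzero | hpos
  · refine (show ContinuousAt (fun z => -1 * f z) a by fun_prop).congr ?_
    filter_upwards [hg.eventually (eventually_lt_nhds hneg)] with z hz
    rw [Real.sign_of_neg hz]
  · have hf0 : Tendsto f (𝓝 a) (𝓝 0) := h hzero ▸ hf
    rw [ContinuousAt, hzero, h hzero, Real.sign_zero, zero_mul]
    refine squeeze_zero_norm (fun z => ?_) (by simpa using hf0.norm)
    rw [Real.norm_eq_abs, abs_mul]
    exact mul_le_of_le_one_left (abs_nonneg _) (Real.abs_sign_le_one _)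
  · refine (show ContinuousAt (fun z => 1 * f z) a by fun_prop).congr ?_
    filter_upwards [hg.eventually (eventually_gt_nhds hpos)] with z hz
    rw [Real.sign_of_pos hz]

lemma continuous_Gminus : Continuous Gminus := by
  unfold Gminus; fun_prop

lemma continuous_Gplus : Continuous Gplus := by
  unfold Gplus; fun_prop

theorem continuousAt_carccos {z : ℂ} (hz : z ∈ arccosDomain) : ContinuousAt carccos z := by
  have hre : ContinuousAt (fun w : ℂ => Real.sign w.re * Real.arccos (Gminus w)) z :=
    Complex.continuous_re.continuousAt.sign_mul
      (Real.continuous_arccos.comp continuous_Gminus).continuousAt fun h => by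
        rw [Gminus_eq_one_of_re_eq_zero h, Real.arccos_one]
  have him : ContinuousAt (fun w : ℂ => Real.sign w.im * arcosh (Gplus w)) z :=
    Complex.continuous_im.continuousAt.sign_mul
      (Real.continuousOn_arcosh.comp_continuous continuous_Gplus one_le_Gplus).continuousAt
      fun h => by
        rw [Gplus_eq_one_of_im_eq_zero h (hz h), arcosh_eq_real_arcosh, Real.arcosh_zero]
  unfold carccos carcsin
  fun_prop

lemma tendsto_carccos_one : Tendsto carccos (𝓝 1) (𝓝 0) :=
  carccos_one ▸ (continuousAt_carccos (by simp [arccosDomain])).tendsto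

lemma tendsto_carccos_neg_one : Tendsto carccos (𝓝 (-1)) (𝓝 Real.pi) :=
  carccos_neg_one ▸ (continuousAt_carccos (by simp [arccosDomain])).tendsto

end ComplexArccos

section LineThroughDirection

open NormedSpace

variable {V : Type*} [NormedAddCommGroup V] [NormedSpace ℝ V] {x y : V}

lemma norm_add_smul_convex (x y : V) {c w d : ℝ} (hcw : c ≤ w) (hwd : w ≤ d) :
    (d - c) * ‖y + w • x‖ ≤ (d - w) * ‖y + c • x‖ + (w - c) * ‖y + d • x‖ := by
  have key : (d - c) • (y + w • x) = (d - w) • (y + c • x) + (w - c) • (y + d • x) := by module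
  have h := norm_add_le ((d - w) • (y + c • x)) ((w - c) • (y + d • x))
  rwa [← key, norm_smul, norm_smul, norm_smul, Real.norm_of_nonneg (by linarith),
    Real.norm_of_nonneg (by linarith), Real.norm_of_nonneg (by linarith)] at h

lemma abs_norm_add_smul_sub_le (x y : V) (s t : ℝ) :
    |‖y + t • x‖ - ‖y + s • x‖| ≤ ‖x‖ * |t - s| := by
  have h := abs_norm_sub_norm_le (y + t • x) (y + s • x)
  rwa [show y + t • x - (y + s • x) = (t - s) • x by module, norm_smul, Real.norm_eq_abs,
    mul_comm] at h

lemma norm_smul_normalize_add_normalize (x z : V) :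
    ‖z‖ • (normalize x + normalize z) = z + (‖z‖ / ‖x‖) • x := by
  rw [smul_add, norm_smul_normalize, NormedSpace.normalize, smul_smul, div_eq_mul_inv, add_comm]

lemma norm_mul_norm_normalize_add (x y : V) (t : ℝ) :
    ‖y + t • x‖ * ‖normalize x + normalize (y + t • x)‖
      = ‖y + (t + ‖y + t • x‖ / ‖x‖) • x‖ := by
  rw [← Real.norm_of_nonneg (norm_nonneg (y + t • x)), ← norm_smul,
    Real.norm_of_nonneg (norm_nonneg _), norm_smul_normalize_add_normalize, add_smul, add_assoc]

lemma normalize_add_normalize_ne_zero (hz : ∀ t : ℝ, y + t • x ≠ 0) (t : ℝ) :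
    normalize x + normalize (y + t • x) ≠ 0 := by
  intro h
  apply hz (t + ‖y + t • x‖ / ‖x‖)
  rw [add_smul, ← add_assoc, ← norm_smul_normalize_add_normalize, h, smul_zero]

variable {t₁ t₂ : ℝ}

/- Put `sᵢ = tᵢ + ‖y + tᵢ • x‖ / ‖x‖`, so that `‖y + sᵢ • x‖ = ‖y + tᵢ • x‖ * ‖u + v tᵢ‖`. The next
two lemmas are the convexity of `s ↦ ‖y + s • x‖` on `[t₁, s₂]` at `t₂` and at `s₁`. -/

lemma sub_add_le_mul_norm_normalize_add (hx : x ≠ 0) (h₂ : y + t₂ • x ≠ 0) (ht : t₁ ≤ t₂) :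
    ‖x‖ * (t₂ - t₁) + ‖y + t₂ • x‖ - ‖y + t₁ • x‖
      ≤ ‖x‖ * (t₂ - t₁) * ‖normalize x + normalize (y + t₂ • x)‖ := by
  have hk : 0 < ‖x‖ := norm_pos_iff.mpr hx
  have hm₂ : 0 < ‖y + t₂ • x‖ := norm_pos_iff.mpr h₂
  have hconv := norm_add_smul_convex x y ht
    (le_add_of_nonneg_right (div_nonneg (norm_nonneg (y + t₂ • x)) hk.le))
  rw [← norm_mul_norm_normalize_add] at hconv
  field_simp at hconv
  exact le_of_mul_le_mul_left (by linarith) hm₂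

lemma norm_normalize_add_mul_le (hx : x ≠ 0) (h₁ : y + t₁ • x ≠ 0) (ht : t₁ ≤ t₂) :
    ‖normalize x + normalize (y + t₁ • x)‖ * (‖x‖ * (t₂ - t₁) + ‖y + t₂ • x‖)
      ≤ ‖x‖ * (t₂ - t₁) + ‖y + t₂ • x‖ - ‖y + t₁ • x‖
        + ‖y + t₂ • x‖ * ‖normalize x + normalize (y + t₂ • x)‖ := by
  have hk : 0 < ‖x‖ := norm_pos_iff.mpr hx
  have hm₁ : 0 < ‖y + t₁ • x‖ := norm_pos_iff.mpr h₁
  have hlip := abs_norm_add_smul_sub_le x y t₁ t₂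
  rw [abs_of_nonneg (sub_nonneg.mpr ht)] at hlip
  have hs₁ : t₁ ≤ t₁ + ‖y + t₁ • x‖ / ‖x‖ := le_add_of_nonneg_right (by positivity)
  have hs₁₂ : t₁ + ‖y + t₁ • x‖ / ‖x‖ ≤ t₂ + ‖y + t₂ • x‖ / ‖x‖ := by
    rw [← sub_nonneg]
    have : t₂ + ‖y + t₂ • x‖ / ‖x‖ - (t₁ + ‖y + t₁ • x‖ / ‖x‖)
        = (‖x‖ * (t₂ - t₁) + ‖y + t₂ • x‖ - ‖y + t₁ • x‖) / ‖x‖ := by field_simp; ring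
    rw [this]
    exact div_nonneg (by linarith [neg_abs_le (‖y + t₂ • x‖ - ‖y + t₁ • x‖)]) hk.le
  have hconv := norm_add_smul_convex x y hs₁ hs₁₂
  rw [← norm_mul_norm_normalize_add, ← norm_mul_norm_normalize_add] at hconv
  field_simp at hconv
  exact le_of_mul_le_mul_left (by linarith) hm₁

lemma add_le_norm_mul_add_norm_mul (hx : x ≠ 0) (ht : t₁ ≤ t₂) :
    ‖x‖ * (t₂ - t₁) + ‖y + t₁ • x‖ + ‖y + t₂ • x‖
      ≤ ‖y + t₂ • x‖ * ‖normalize x + normalize (y + t₂ • x)‖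
        + ‖y + t₁ • x‖ * ‖normalize x - normalize (y + t₁ • x)‖ := by
  have key : ‖y + t₂ • x‖ • (normalize x + normalize (y + t₂ • x))
      + ‖y + t₁ • x‖ • (normalize x - normalize (y + t₁ • x))
      = (‖x‖ * (t₂ - t₁) + ‖y + t₁ • x‖ + ‖y + t₂ • x‖) • normalize x := by
    have hxu : ‖x‖ • normalize x = x := norm_smul_normalize x
    rw [smul_sub, smul_add, norm_smul_normalize, norm_smul_normalize]
    linear_combination (norm := module) (t₁ - t₂) • hxu
  have h := norm_add_le (‖y + t₂ • x‖ • (normalize x + normalize (y + t₂ • x)))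
    (‖y + t₁ • x‖ • (normalize x - normalize (y + t₁ • x)))
  rwa [key, norm_smul, norm_smul, norm_smul, norm_normalize hx, mul_one, Real.norm_of_nonneg,
    Real.norm_of_nonneg (norm_nonneg _), Real.norm_of_nonneg (norm_nonneg _)] at h
  exact add_nonneg (add_nonneg (mul_nonneg (norm_nonneg _) (sub_nonneg.mpr ht)) (norm_nonneg _))
    (norm_nonneg _)

lemma norm_normalize_neg_add (x z : V) :
    ‖normalize (-x) + normalize z‖ = ‖normalize x - normalize z‖ := by
  rw [NormedSpace.normalize_neg, neg_add_eq_sub, norm_sub_rev]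

/- The statements about `u - v t` are those about `u + v t` for the same line traversed backwards:
`y + t • x = y + (-t) • (-x)` and `normalize (-x) = -normalize x`. -/

lemma normalize_sub_normalize_ne_zero (hz : ∀ t : ℝ, y + t • x ≠ 0) (t : ℝ) :
    normalize x - normalize (y + t • x) ≠ 0 := by
  have h := normalize_add_normalize_ne_zero (x := -x) (fun s => by simpa using hz (-s)) (-t)
  rwa [← norm_ne_zero_iff, neg_smul_neg, norm_normalize_neg_add, norm_ne_zero_iff] at h

lemma sub_add_le_mul_norm_normalize_sub (hx : x ≠ 0) (h₁ : y + t₁ • x ≠ 0) (ht : t₁ ≤ t₂) :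
    ‖x‖ * (t₂ - t₁) + ‖y + t₁ • x‖ - ‖y + t₂ • x‖
      ≤ ‖x‖ * (t₂ - t₁) * ‖normalize x - normalize (y + t₁ • x)‖ := by
  have h := sub_add_le_mul_norm_normalize_add (neg_ne_zero.mpr hx)
    (by rwa [neg_smul_neg]) (neg_le_neg ht)
  rwa [norm_neg, neg_smul_neg, neg_smul_neg, norm_normalize_neg_add, neg_sub_neg] at h

lemma norm_normalize_sub_mul_le (hx : x ≠ 0) (h₂ : y + t₂ • x ≠ 0) (ht : t₁ ≤ t₂) :
    ‖normalize x - normalize (y + t₂ • x)‖ * (‖x‖ * (t₂ - t₁) + ‖y + t₁ • x‖)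
      ≤ ‖x‖ * (t₂ - t₁) + ‖y + t₁ • x‖ - ‖y + t₂ • x‖
        + ‖y + t₁ • x‖ * ‖normalize x - normalize (y + t₁ • x)‖ := by
  have h := norm_normalize_add_mul_le (neg_ne_zero.mpr hx)
    (by rwa [neg_smul_neg]) (neg_le_neg ht)
  rwa [norm_neg, neg_smul_neg, neg_smul_neg, norm_normalize_neg_add,
    norm_normalize_neg_add, neg_sub_neg] at h

theorem monotone_norm_normalize_add (hx : x ≠ 0) (hz : ∀ t : ℝ, y + t • x ≠ 0) :
    Monotone fun t : ℝ => ‖normalize x + normalize (y + t • x)‖ := by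
  intro t₁ t₂ ht
  have hpos : 0 < ‖x‖ * (t₂ - t₁) + ‖y + t₂ • x‖ :=
    add_pos_of_nonneg_of_pos (mul_nonneg (norm_nonneg x) (sub_nonneg.mpr ht))
      (norm_pos_iff.mpr (hz t₂))
  have h₁ := norm_normalize_add_mul_le hx (hz t₁) ht
  have h₂ := sub_add_le_mul_norm_normalize_add hx (hz t₂) ht
  exact le_of_mul_le_mul_right (by linarith) hpos

theorem antitone_norm_normalize_sub (hx : x ≠ 0) (hz : ∀ t : ℝ, y + t • x ≠ 0) :
    Antitone fun t : ℝ => ‖normalize x - normalize (y + t • x)‖ := by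
  intro t₁ t₂ ht
  have h := monotone_norm_normalize_add (neg_ne_zero.mpr hx) (fun s => by simpa using hz (-s))
    (neg_le_neg ht)
  simpa only [neg_smul_neg, norm_normalize_neg_add] using h

lemma norm_normalize_add_ne_of_sub_eq (hx : x ≠ 0) (hz : ∀ t : ℝ, y + t • x ≠ 0) (ht : t₁ < t₂)
    (hsub : ‖normalize x - normalize (y + t₁ • x)‖ = ‖normalize x - normalize (y + t₂ • x)‖) :
    ‖normalize x + normalize (y + t₁ • x)‖ ≠ ‖normalize x + normalize (y + t₂ • x)‖ := by
  intro hadd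
  have hF₁_up := norm_normalize_add_mul_le hx (hz t₁) ht.le
  have hF₂_low := sub_add_le_mul_norm_normalize_add hx (hz t₂) ht.le
  have hG₁_low := sub_add_le_mul_norm_normalize_sub hx (hz t₁) ht.le
  have hG₂_up := norm_normalize_sub_mul_le hx (hz t₂) ht.le
  have htri := add_le_norm_mul_add_norm_mul (y := y) hx ht.le
  have hF₂ := norm_pos_iff.mpr (normalize_add_normalize_ne_zero hz t₂)
  have hG₁ := norm_pos_iff.mpr (normalize_sub_normalize_ne_zero hz t₁)
  have hD : 0 < ‖x‖ * (t₂ - t₁) := mul_pos (norm_pos_iff.mpr hx) (sub_pos.mpr ht)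
  rw [hadd] at hF₁_up
  rw [← hsub] at hG₂_up
  set D := ‖x‖ * (t₂ - t₁)
  set m₁ := ‖y + t₁ • x‖
  set m₂ := ‖y + t₂ • x‖
  set F₂ := ‖normalize x + normalize (y + t₂ • x)‖
  set G₁ := ‖normalize x - normalize (y + t₁ • x)‖
  have hF : D * F₂ = D + m₂ - m₁ := by linarith
  have hG : D * G₁ = D + m₁ - m₂ := by linarith
  have htri' : D * (m₂ * F₂ + m₁ * G₁) = D * (m₁ + m₂) + (m₂ - m₁) ^ 2 := by
    linear_combination m₂ * hF + m₁ * hG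
  have hprod : D ^ 2 * (F₂ * G₁) = D ^ 2 - (m₂ - m₁) ^ 2 := by
    linear_combination (D * G₁) * hF + (D + m₂ - m₁) * hG
  linarith [mul_pos (pow_pos hD 2) (mul_pos hF₂ hG₁), mul_le_mul_of_nonneg_left htri hD.le]

theorem strictMono_norm_normalize_add_sq_sub_sq (hx : x ≠ 0) (hz : ∀ t : ℝ, y + t • x ≠ 0) :
    StrictMono fun t : ℝ =>
      ‖normalize x + normalize (y + t • x)‖ ^ 2 - ‖normalize x - normalize (y + t • x)‖ ^ 2 := by
  intro t₁ t₂ ht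
  have hadd := pow_le_pow_left₀ (norm_nonneg _) (monotone_norm_normalize_add hx hz ht.le) 2
  have hsub := pow_le_pow_left₀ (norm_nonneg _) (antitone_norm_normalize_sub hx hz ht.le) 2
  refine lt_of_le_of_ne (by linarith) fun heq => norm_normalize_add_ne_of_sub_eq hx hz ht ?_ ?_
  · exact (pow_left_inj₀ (norm_nonneg _) (norm_nonneg _) two_ne_zero).mp (by linarith)
  · exact (pow_left_inj₀ (norm_nonneg _) (norm_nonneg _) two_ne_zero).mp (by linarith)

lemma continuousAt_normalize {x : V} (hx : x ≠ 0) : ContinuousAt (normalize : V → V) x :=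
  (continuous_norm.continuousAt.inv₀ (norm_ne_zero_iff.mpr hx)).smul continuousAt_id

lemma continuous_normalize_add_smul (hz : ∀ t : ℝ, y + t • x ≠ 0) :
    Continuous fun t : ℝ => normalize (y + t • x) :=
  continuous_iff_continuousAt.mpr fun t =>
    ContinuousAt.comp (g := NormedSpace.normalize) (continuousAt_normalize (hz t)) (by fun_prop)

lemma tendsto_normalize_add_smul_atTop (y : V) (hx : x ≠ 0) :
    Tendsto (fun t : ℝ => normalize (y + t • x)) atTop (𝓝 (normalize x)) := by
  have hlin : Tendsto (fun t : ℝ => t⁻¹ • y + x) atTop (𝓝 x) := by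
    simpa using ((tendsto_inv_atTop_zero (𝕜 := ℝ)).smul_const y).add_const x
  refine ((continuousAt_normalize hx).tendsto.comp hlin).congr' ?_
  filter_upwards [eventually_gt_atTop 0] with t ht
  have h : t⁻¹ • y + x = t⁻¹ • (y + t • x) := by
    rw [smul_add, smul_smul, inv_mul_cancel₀ ht.ne', one_smul]
  rw [Function.comp_apply, h, NormedSpace.normalize_smul_of_pos (inv_pos.mpr ht)]

lemma tendsto_normalize_add_smul_atBot (y : V) (hx : x ≠ 0) :
    Tendsto (fun t : ℝ => normalize (y + t • x)) atBot (𝓝 (-normalize x)) := by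
  rw [← NormedSpace.normalize_neg]
  refine ((tendsto_normalize_add_smul_atTop y (neg_ne_zero.mpr hx)).comp
    tendsto_neg_atBot_atTop).congr fun t => ?_
  rw [Function.comp_apply, neg_smul_neg]

end LineThroughDirection

section ComplexNormedSpace

open NormedSpace

variable {X : Type*} [NormedAddCommGroup X] [NormedSpace ℂ X]

noncomputable def polarization (u v : X) : ℂ :=
  (1 / 4 : ℂ) *
    (((‖u + v‖ ^ 2 - ‖u - v‖ ^ 2 : ℝ) : ℂ)
      + Complex.I * ((‖u + Complex.I • v‖ ^ 2 - ‖u - Complex.I • v‖ ^ 2 : ℝ) : ℂ))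

lemma polarization_re (u v : X) :
    (polarization u v).re = (‖u + v‖ ^ 2 - ‖u - v‖ ^ 2) / 4 := by
  simp only [polarization, Complex.mul_re, Complex.add_re, Complex.add_im, Complex.ofReal_re,
    Complex.ofReal_im, Complex.I_re, Complex.I_im, Complex.mul_im]
  norm_num
  ring

lemma polarization_neg_right (u v : X) : polarization u (-v) = -polarization u v := by
  simp only [polarization, smul_neg, sub_neg_eq_add, ← sub_eq_add_neg]
  push_cast
  ring

lemma polarization_self {u : X} (hu : ‖u‖ = 1) : polarization u u = 1 := by
  have h₁ : u + Complex.I • u = (1 + Complex.I) • u := by rw [add_smul, one_smul]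
  have h₂ : u - Complex.I • u = (1 - Complex.I) • u := by rw [sub_smul, one_smul]
  have h₃ : u + u = (2 : ℝ) • u := two_smul ℝ u |>.symm
  have h₄ : ‖(1 : ℂ) - Complex.I‖ = ‖1 + Complex.I‖ := by
    rw [← Complex.norm_conj]; simp
  rw [polarization, h₁, h₂, h₃, sub_self, norm_smul, norm_smul, norm_smul, hu, h₄]
  norm_num

lemma abs_polarization_re_le {u v : X} (hu : ‖u‖ ≤ 1) (hv : ‖v‖ ≤ 1) :
    |(polarization u v).re| ≤ 1 := by
  have hadd : ‖u + v‖ ≤ 2 := (norm_add_le u v).trans (by linarith)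
  have hsub : ‖u - v‖ ≤ 2 := (norm_sub_le u v).trans (by linarith)
  rw [polarization_re, abs_le]
  constructor <;> nlinarith [norm_nonneg (u + v), norm_nonneg (u - v)]

lemma Continuous.polarization {α : Type*} [TopologicalSpace α] {f g : α → X}
    (hf : Continuous f) (hg : Continuous g) : Continuous fun a => polarization (f a) (g a) := by
  unfold _root_.polarization; fun_prop

lemma Filter.Tendsto.polarization {α : Type*} {l : Filter α} {f g : α → X} {u v : X}
    (hf : Tendsto f l (𝓝 u)) (hg : Tendsto g l (𝓝 v)) :
    Tendsto (fun a => polarization (f a) (g a)) l (𝓝 (polarization u v)) :=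
  Tendsto.comp (f := fun a => (f a, g a)) (g := fun p : X × X => _root_.polarization p.1 p.2)
    ((continuous_fst.polarization continuous_snd).tendsto (u, v)) (hf.prodMk_nhds hg)

lemma cangle_eq_carccos_polarization {x z : X} (hx : x ≠ 0) (hz : z ≠ 0) :
    cangle x z = carccos (polarization (normalize x) (normalize z)) := by
  have hxz : ((‖x‖ * ‖z‖ : ℝ) : ℂ) ≠ 0 := by
    exact_mod_cast mul_ne_zero (norm_ne_zero_iff.mpr hx) (norm_ne_zero_iff.mpr hz)
  rw [cangle, cprod, if_neg (not_or.mpr ⟨hx, hz⟩), mul_assoc, mul_div_cancel_left₀ _ hxz]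
  simp only [Complex.coe_smul]
  rfl

lemma tendsto_polarization_normalize_add_smul_atTop {x : X} (y : X) (hx : x ≠ 0) :
    Tendsto (fun t : ℝ => polarization (normalize x) (normalize (y + t • x))) atTop (𝓝 1) := by
  simpa only [polarization_self (norm_normalize hx)] using
    (tendsto_const_nhds (x := normalize x)).polarization (tendsto_normalize_add_smul_atTop y hx)

lemma tendsto_polarization_normalize_add_smul_atBot {x : X} (y : X) (hx : x ≠ 0) :
    Tendsto (fun t : ℝ => polarization (normalize x) (normalize (y + t • x))) atBot (𝓝 (-1)) := by
  simpa only [polarization_neg_right, polarization_self (norm_normalize hx)] using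
    (tendsto_const_nhds (x := normalize x)).polarization (tendsto_normalize_add_smul_atBot y hx)

end ComplexNormedSpace

/-- An 8: for `x, y` linearly independent over `ℝ`, the map
`Θ(t) = ∠(x, y + t·x)` is continuous and injective, with limits `π` at `−∞` and `0` at `+∞`. -/
theorem stmt11 {X : Type*} [NormedAddCommGroup X] [NormedSpace ℂ X] (x y : X)
    (hind : LinearIndependent ℝ ![x, y]) :
    Continuous (fun t : ℝ => cangle x (y + (t : ℂ) • x)) ∧
    Function.Injective (fun t : ℝ => cangle x (y + (t : ℂ) • x)) ∧
    Filter.Tendsto (fun t : ℝ => cangle x (y + (t : ℂ) • x)) Filter.atBot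
      (nhds ((Real.pi : ℝ) : ℂ)) ∧
    Filter.Tendsto (fun t : ℝ => cangle x (y + (t : ℂ) • x)) Filter.atTop (nhds 0) := by
  have hx : x ≠ 0 := by simpa using hind.ne_zero 0
  have hz (t : ℝ) : y + t • x ≠ 0 := fun h =>
    one_ne_zero (LinearIndependent.pair_iff.mp hind t 1 (by rwa [one_smul, add_comm])).2
  set P := fun t : ℝ => polarization (NormedSpace.normalize x) (NormedSpace.normalize (y + t • x))
  have hΘ : (fun t : ℝ => cangle x (y + (t : ℂ) • x)) = fun t => carccos (P t) :=
    funext fun t => by rw [Complex.coe_smul, cangle_eq_carccos_polarization hx (hz t)]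
  have hP_dom (t : ℝ) : P t ∈ arccosDomain := fun _ =>
    abs_polarization_re_le (NormedSpace.norm_normalize hx).le
      (NormedSpace.norm_normalize (hz t)).le
  have hP_cont : Continuous P := continuous_const.polarization (continuous_normalize_add_smul hz)
  have hP_re : StrictMono fun t => (P t).re := by
    simpa only [P, polarization_re] using
      (strictMono_norm_normalize_add_sq_sub_sq hx hz).div_const four_pos
  rw [hΘ]
  exact ⟨continuous_iff_continuousAt.mpr fun t =>
      (continuousAt_carccos (hP_dom t)).comp hP_cont.continuousAt,
    fun t₁ t₂ h => hP_re.injective (congrArg Complex.re (carccos_injOn (hP_dom t₁) (hP_dom t₂) h)),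
    tendsto_carccos_neg_one.comp (tendsto_polarization_normalize_add_smul_atBot y hx),
    tendsto_carccos_one.comp (tendsto_polarization_normalize_add_smul_atTop y hx)⟩
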